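/- Let α ∈ (1,∞), let p_X be a strictly positive probability distribution on 𝒳 and p_{Y|X} a channel with p_{Y|X}(y|x) > 0 for all x, y. (1) For any strictly positive probability distribution q̃_{X,Y} on 𝒳×𝒴, the map r_{X|Y} ↦ F̃_α^{LP}(q̃_{X,Y}, r_{X|Y}) over reverse channels is maximized by the posterior r*_{X|Y}(x|y) := q̃_{X,Y}(x,y) / Σ_{x'} q̃_{X,Y}(x',y). (2) For any strictly positive reverse channel r_{X|Y}, the map q̃_{X,Y} ↦ F̃_α^{LP}(q̃_{X,Y}, r_{X|Y}) over strictly positive probability distributions q̃_{X,Y} is maximized by q̃*_{X,Y}(x,y) := q̂_X(x) q̂_{Y|X}(y|x), where q̂_{Y|X}(y|x) := p_{Y|X}(y|x) r_{X|Y}(x|y)^{1−1/α} / Σ_{y'} p_{Y|X}(y'|x) r_{X|Y}(x|y')^{1−1/α} and q̂_X(x) := p_X(x)^{α/(2α−1)} ( Σ_y p_{Y|X}(y|x) r_{X|Y}(x|y)^{1−1/α} )^{α/(2α−1)} / Σ_{x'} p_X(x')^{α/(2α−1)} ( Σ_y p_{Y|X}(y|x') r_{X|Y}(x'|y)^{1−1/α}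 )^{α/(2α−1)}. -/

import Mathlib

/-- A probability mass function on a finite type. -/
def IsPMF {Z : Type*} [Fintype Z] (q : Z → ℝ) : Prop :=
  (∀ z, 0 ≤ q z) ∧ ∑ z, q z = 1

/-- Kullback--Leibler divergence (natural log). -/
noncomputable def klD {Z : Type*} [Fintype Z] (p q : Z → ℝ) : ℝ :=
  ∑ z, p z * Real.log (p z / q z)

/-- Extended-real logarithm: `elog 0 = ⊥` (i.e. `log 0 = −∞`). -/
noncomputable def elog (t : ℝ) : EReal :=
  if t = 0 then ⊥ else ((Real.log t : ℝ) : EReal)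

/-- `F̃_α^{LP}(q̃_{X,Y}, r_{X|Y}) = (α/(1−α)) D(q̃_{X,Y} ‖ q̃_X p_{Y|X})
  + Σ_{x,y} q̃_{X,Y}(x,y) log(r(x|y)/q̃_X(x)) + (α/(1−α)) D(q̃_X ‖ p_X)`,
valued in `ℝ ∪ {−∞}` (as `EReal`). -/
noncomputable def FtildeLP {X Y : Type*} [Fintype X] [Fintype Y]
    (α : ℝ) (pX : X → ℝ) (pYX : X → Y → ℝ) (qt : X × Y → ℝ) (r : Y → X → ℝ) : EReal :=
  (((α / (1 - α)) * klD qt (fun z : X × Y => (∑ y, qt (z.1, y)) * pYX z.1 z.2) : ℝ) : EReal)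
  + ∑ z : X × Y, ((qt z : ℝ) : EReal) * elog (r z.2 z.1 / ∑ y, qt (z.1, y))
  + (((α / (1 - α)) * klD (fun x => ∑ y, qt (x, y)) pX : ℝ) : EReal)

/-!
(1) Only the middle term of `F̃` depends on `r`, and it equals
`Σ_y q̃_Y(y) Σ_x q̃(x|y) log r(x|y)` up to a constant; by Gibbs' inequality this is largest at
the posterior `r(x|y) = q̃(x|y)` (and it is `−∞` as soon as `r` vanishes somewhere).

(2) Put `β = α/(1−α)`, `s = 1 − 1/α`, `γ = α/(2α−1)`, so that `β s = −1` and `(β − 1) γ = β`.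
These two relations turn `F̃` into
`β D(q̃ ‖ q̃_X q̂_{Y|X}) + (β − 1) D(q̃_X ‖ q̂_X) + (1 − β) log Z`,
with `Z` the normalizer of `q̂_X`. For `α > 1` both coefficients `β` and `β − 1` are negative,
so `F̃ ≤ (1 − β) log Z`, with equality at `q̃ = q̂_X q̂_{Y|X}`, where both divergences vanish.
-/

open Finset Real

lemma EReal.coe_finset_sum {ι : Type*} (s : Finset ι) (f : ι → ℝ) :
    ((∑ i ∈ s, f i : ℝ) : EReal) = ∑ i ∈ s, (f i : EReal) :=
  map_sum (⟨⟨(↑), EReal.coe_zero⟩, EReal.coe_add⟩ : ℝ →+ EReal) f s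

lemma elog_of_ne_zero {t : ℝ} (ht : t ≠ 0) : elog t = (log t : EReal) := if_neg ht

lemma sum_prod_mul_fst {X Y : Type*} [Fintype X] [Fintype Y] (qt : X × Y → ℝ) (f : X → ℝ) :
    ∑ z : X × Y, qt z * f z.1 = ∑ x, (∑ y, qt (x, y)) * f x := by
  rw [Fintype.sum_prod_type]
  exact sum_congr rfl fun x _ => by simp [sum_mul]

section Gibbs

variable {Z : Type*} [Fintype Z]

lemma klD_self (p : Z → ℝ) : klD p p = 0 :=
  sum_eq_zero fun z _ => by by_cases h : p z = 0 <;> simp [h]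

lemma klD_nonneg {a b : Z → ℝ} (ha : ∀ z, 0 ≤ a z) (hb : ∀ z, 0 < b z)
    (hsum : ∑ z, b z ≤ ∑ z, a z) : 0 ≤ klD a b := by
  have hterm : ∀ z, a z - b z ≤ a z * log (a z / b z) := by
    intro z
    rcases (ha z).eq_or_lt with h | h
    · simp [← h, (hb z).le]
    · have hlog := one_sub_inv_le_log_of_pos (div_pos h (hb z))
      calc a z - b z = a z * (1 - (a z / b z)⁻¹) := by field_simp
        _ ≤ a z * log (a z / b z) := mul_le_mul_of_nonneg_left hlog h.le
  have := sum_le_sum fun z (_ : z ∈ univ) => hterm z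
  rw [sum_sub_distrib] at this
  exact (sub_nonneg.2 hsum).trans this

lemma sum_mul_log_le_sum_mul_log {a c d : Z → ℝ} (ha : ∀ z, 0 < a z) (hc : ∀ z, 0 < c z)
    (hd : ∀ z, 0 < d z) (hsum : ∑ z, a z * (c z / d z) ≤ ∑ z, a z) :
    ∑ z, a z * log (c z) ≤ ∑ z, a z * log (d z) := by
  have hkl := klD_nonneg (fun z => (ha z).le)
    (fun z => mul_pos (ha z) (div_pos (hc z) (hd z))) hsum
  have hterm : ∀ z,
      a z * log (a z / (a z * (c z / d z))) = a z * log (d z) - a z * log (c z) := by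
    intro z
    rw [← mul_sub, ← log_div (hd z).ne' (hc z).ne']
    congr 2
    field_simp [(ha z).ne']
  simp only [klD, hterm, sum_sub_distrib] at hkl
  linarith

lemma sum_coe_mul_elog_eq_coe (a : Z → ℝ) {c : Z → ℝ} (hc : ∀ z, c z ≠ 0) :
    ∑ z, (a z : EReal) * elog (c z) = ((∑ z, a z * log (c z) : ℝ) : EReal) := by
  rw [EReal.coe_finset_sum]
  exact sum_congr rfl fun z _ => by rw [elog_of_ne_zero (hc z), EReal.coe_mul]

lemma sum_coe_mul_elog_le {a c d : Z → ℝ} (ha : ∀ z, 0 < a z) (hc : ∀ z, 0 ≤ c z)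
    (hd : ∀ z, 0 < d z) (hsum : ∑ z, a z * (c z / d z) ≤ ∑ z, a z) :
    ∑ z, (a z : EReal) * elog (c z) ≤ ∑ z, (a z : EReal) * elog (d z) := by
  classical
  by_cases hc₀ : ∃ z, c z = 0
  · obtain ⟨z₀, hz₀⟩ := hc₀
    rw [← add_sum_erase _ _ (mem_univ z₀), hz₀, elog, if_pos rfl,
      EReal.coe_mul_bot_of_pos (ha z₀), EReal.bot_add]
    exact bot_le
  · push Not at hc₀
    rw [sum_coe_mul_elog_eq_coe a hc₀, sum_coe_mul_elog_eq_coe a fun z => (hd z).ne',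
      EReal.coe_le_coe_iff]
    exact sum_mul_log_le_sum_mul_log ha (fun z => (hc z).lt_of_ne' (hc₀ z)) hd hsum

end Gibbs

theorem FtildeLP_le_FtildeLP_posterior {X Y : Type*} [Fintype X] [Fintype Y] [Nonempty X]
    [Nonempty Y] (α : ℝ) (pX : X → ℝ) (pYX : X → Y → ℝ) {qt : X × Y → ℝ}
    (hqt : ∀ z, 0 < qt z) {r : Y → X → ℝ} (hr : ∀ y, IsPMF (r y)) :
    FtildeLP α pX pYX qt r ≤
      FtildeLP α pX pYX qt (fun y x => qt (x, y) / ∑ x', qt (x', y)) := by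
  have hqX : ∀ x, 0 < ∑ y, qt (x, y) := fun x => sum_pos (fun y _ => hqt _) univ_nonempty
  have hqY : ∀ y, 0 < ∑ x, qt (x, y) := fun y => sum_pos (fun x _ => hqt _) univ_nonempty
  refine add_le_add_left (add_le_add_right (sum_coe_mul_elog_le hqt
    (fun z => div_nonneg ((hr z.2).1 z.1) (hqX z.1).le)
    (fun z => div_pos (div_pos (hqt _) (hqY z.2)) (hqX z.1)) (le_of_eq ?_)) _) _
  have hterm : ∀ z : X × Y, qt z * ((r z.2 z.1 / ∑ y, qt (z.1, y)) /
      ((qt (z.1, z.2) / ∑ x, qt (x, z.2)) / ∑ y, qt (z.1, y)))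
      = r z.2 z.1 * ∑ x, qt (x, z.2) := by
    intro z
    field_simp [(hqt z).ne', (hqX z.1).ne', (hqY z.2).ne']
  simp only [hterm]
  rw [Fintype.sum_prod_type_right, Fintype.sum_prod_type_right qt]
  exact sum_congr rfl fun y _ => by dsimp only; rw [← sum_mul, (hr y).2, one_mul]

lemma tilted_log_identity {α q m p t u A B : ℝ} (hq : 0 < q) (hm : 0 < m) (hp : 0 < p)
    (ht : 0 < t) (hu : 0 < u) (hA : 0 < A) (hB : 0 < B) (hα₀ : α ≠ 0) (hα₁ : α ≠ 1)
    (hα₂ : 2 * α ≠ 1) :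
    α / (1 - α) * log (q / (m * p)) + log (t / m) + α / (1 - α) * log (m / u)
      = α / (1 - α) * log (q / (m * (p * t ^ (1 - 1 / α) / A)))
        + (α / (1 - α) - 1) * log (m / (u ^ (α / (2 * α - 1)) * A ^ (α / (2 * α - 1)) / B))
        + (1 - α / (1 - α)) * log B := by
  have h₁ : 1 - α ≠ 0 := sub_ne_zero.2 (Ne.symm hα₁)
  have h₂ : 2 * α - 1 ≠ 0 := sub_ne_zero.2 hα₂
  have hβs : α / (1 - α) * (1 - 1 / α) = -1 := by field_simp; ring
  have hβγ : (α / (1 - α) - 1) * (α / (2 * α - 1)) = α / (1 - α) := by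
    rw [div_sub_one h₁, div_mul_div_comm, div_eq_div_iff (mul_ne_zero h₁ h₂) h₁]; ring
  have htpow := rpow_pos_of_pos ht (1 - 1 / α)
  have hupow := rpow_pos_of_pos hu (α / (2 * α - 1))
  have hApow := rpow_pos_of_pos hA (α / (2 * α - 1))
  rw [log_div hq.ne' (by positivity), log_div hq.ne' (by positivity), log_div ht.ne' hm.ne',
    log_div hm.ne' hu.ne', log_div hm.ne' (by positivity), log_mul hm.ne' hp.ne',
    log_mul hm.ne' (by positivity), log_div (by positivity) hA.ne', log_mul hp.ne' htpow.ne',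
    log_div (by positivity) hB.ne', log_mul hupow.ne' hApow.ne', log_rpow ht, log_rpow hu,
    log_rpow hA]
  linear_combination log t * hβs + (log u + log A) * hβγ

section Tilted

variable {X Y : Type*} [Fintype Y] (α : ℝ) (pX : X → ℝ) (pYX : X → Y → ℝ)
  (r : Y → X → ℝ)

noncomputable def tiltedWeight (x : X) : ℝ := ∑ y, pYX x y * r y x ^ (1 - 1 / α)

noncomputable def tiltedChannel (x : X) (y : Y) : ℝ :=
  pYX x y * r y x ^ (1 - 1 / α) / tiltedWeight α pYX r x

noncomputable def tiltedPartition [Fintype X] : ℝ :=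
  ∑ x, pX x ^ (α / (2 * α - 1)) * tiltedWeight α pYX r x ^ (α / (2 * α - 1))

noncomputable def tiltedMarginal [Fintype X] (x : X) : ℝ :=
  pX x ^ (α / (2 * α - 1)) * tiltedWeight α pYX r x ^ (α / (2 * α - 1)) /
    tiltedPartition α pX pYX r

noncomputable def tiltedJoint [Fintype X] (z : X × Y) : ℝ :=
  tiltedMarginal α pX pYX r z.1 * tiltedChannel α pYX r z.1 z.2

variable {α pX pYX r}

lemma tiltedWeight_pos [Nonempty Y] (hpYX : ∀ x y, 0 < pYX x y) (hr : ∀ y x, 0 < r y x)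
    (x : X) : 0 < tiltedWeight α pYX r x :=
  sum_pos (fun y _ => mul_pos (hpYX x y) (rpow_pos_of_pos (hr y x) _)) univ_nonempty

lemma tiltedChannel_pos [Nonempty Y] (hpYX : ∀ x y, 0 < pYX x y) (hr : ∀ y x, 0 < r y x)
    (x : X) (y : Y) : 0 < tiltedChannel α pYX r x y :=
  div_pos (mul_pos (hpYX x y) (rpow_pos_of_pos (hr y x) _)) (tiltedWeight_pos hpYX hr x)

lemma sum_tiltedChannel [Nonempty Y] (hpYX : ∀ x y, 0 < pYX x y) (hr : ∀ y x, 0 < r y x)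
    (x : X) : ∑ y, tiltedChannel α pYX r x y = 1 := by
  unfold tiltedChannel
  rw [← sum_div, ← tiltedWeight, div_self (tiltedWeight_pos hpYX hr x).ne']

lemma tiltedPartition_pos [Fintype X] [Nonempty X] [Nonempty Y] (hpX : ∀ x, 0 < pX x)
    (hpYX : ∀ x y, 0 < pYX x y) (hr : ∀ y x, 0 < r y x) : 0 < tiltedPartition α pX pYX r :=
  sum_pos (fun x _ => mul_pos (rpow_pos_of_pos (hpX x) _)
    (rpow_pos_of_pos (tiltedWeight_pos hpYX hr x) _)) univ_nonempty

lemma tiltedMarginal_pos [Fintype X] [Nonempty X] [Nonempty Y] (hpX : ∀ x, 0 < pX x)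
    (hpYX : ∀ x y, 0 < pYX x y) (hr : ∀ y x, 0 < r y x) (x : X) :
    0 < tiltedMarginal α pX pYX r x :=
  div_pos (mul_pos (rpow_pos_of_pos (hpX x) _) (rpow_pos_of_pos (tiltedWeight_pos hpYX hr x) _))
    (tiltedPartition_pos hpX hpYX hr)

lemma sum_tiltedMarginal [Fintype X] [Nonempty X] [Nonempty Y] (hpX : ∀ x, 0 < pX x)
    (hpYX : ∀ x y, 0 < pYX x y) (hr : ∀ y x, 0 < r y x) :
    ∑ x, tiltedMarginal α pX pYX r x = 1 := by
  unfold tiltedMarginal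
  rw [← sum_div, ← tiltedPartition,
    div_self (tiltedPartition_pos hpX hpYX hr).ne']

lemma sum_tiltedJoint_fst [Fintype X] [Nonempty Y] (hpYX : ∀ x y, 0 < pYX x y)
    (hr : ∀ y x, 0 < r y x) (x : X) :
    ∑ y, tiltedJoint α pX pYX r (x, y) = tiltedMarginal α pX pYX r x := by
  simp only [tiltedJoint, ← mul_sum, sum_tiltedChannel hpYX hr, mul_one]

theorem FtildeLP_eq_klD_tilted [Fintype X] [Nonempty X] [Nonempty Y] (hα₀ : α ≠ 0)
    (hα₁ : α ≠ 1) (hα₂ : 2 * α ≠ 1) (hpX : ∀ x, 0 < pX x)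
    (hpYX : ∀ x y, 0 < pYX x y) (hr : ∀ y x, 0 < r y x) {qt : X × Y → ℝ}
    (hqt : ∀ z, 0 < qt z) (hsum : ∑ z, qt z = 1) :
    FtildeLP α pX pYX qt r =
      ((α / (1 - α) * klD qt (fun z => (∑ y, qt (z.1, y)) * tiltedChannel α pYX r z.1 z.2)
        + (α / (1 - α) - 1) * klD (fun x => ∑ y, qt (x, y)) (tiltedMarginal α pX pYX r)
        + (1 - α / (1 - α)) * log (tiltedPartition α pX pYX r) : ℝ) : EReal) := by
  have hqX : ∀ x, 0 < ∑ y, qt (x, y) := fun x => sum_pos (fun y _ => hqt _) univ_nonempty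
  have hlogB : (1 - α / (1 - α)) * log (tiltedPartition α pX pYX r)
      = ∑ z, qt z * ((1 - α / (1 - α)) * log (tiltedPartition α pX pYX r)) := by
    rw [← sum_mul, hsum, one_mul]
  rw [FtildeLP, sum_coe_mul_elog_eq_coe qt fun z => (div_pos (hr z.2 z.1) (hqX z.1)).ne',
    ← EReal.coe_add, ← EReal.coe_add, EReal.coe_eq_coe_iff, hlogB]
  simp only [klD, tiltedChannel, tiltedMarginal, ← sum_prod_mul_fst, mul_sum,
    ← sum_add_distrib]
  refine sum_congr rfl fun z _ => ?_
  linear_combination qt z * tilted_log_identity (hqt z) (hqX z.1) (hpYX z.1 z.2) (hr z.2 z.1)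
    (hpX z.1) (tiltedWeight_pos (α := α) hpYX hr z.1) (tiltedPartition_pos hpX hpYX hr)
    hα₀ hα₁ hα₂

theorem FtildeLP_le_log_tiltedPartition [Fintype X] [Nonempty X] [Nonempty Y] (hα : 1 < α)
    (hpX : ∀ x, 0 < pX x) (hpYX : ∀ x y, 0 < pYX x y) (hr : ∀ y x, 0 < r y x)
    {qt : X × Y → ℝ} (hqt : ∀ z, 0 < qt z) (hsum : ∑ z, qt z = 1) :
    FtildeLP α pX pYX qt r ≤
      ((1 - α / (1 - α)) * log (tiltedPartition α pX pYX r) : ℝ) := by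
  have hqX : ∀ x, 0 < ∑ y, qt (x, y) := fun x => sum_pos (fun y _ => hqt _) univ_nonempty
  have hsumX : ∑ x, ∑ y, qt (x, y) = 1 := by rw [← Fintype.sum_prod_type, hsum]
  have hjoint : 0 ≤ klD qt (fun z => (∑ y, qt (z.1, y)) * tiltedChannel α pYX r z.1 z.2) := by
    refine klD_nonneg (fun z => (hqt z).le)
      (fun z => mul_pos (hqX z.1) (tiltedChannel_pos hpYX hr z.1 z.2)) (le_of_eq ?_)
    rw [Fintype.sum_prod_type, hsum, ← hsumX]
    simp only [← mul_sum, sum_tiltedChannel hpYX hr, mul_one]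
  have hmarg : 0 ≤ klD (fun x => ∑ y, qt (x, y)) (tiltedMarginal α pX pYX r) :=
    klD_nonneg (fun x => (hqX x).le) (tiltedMarginal_pos hpX hpYX hr)
      (by rw [sum_tiltedMarginal hpX hpYX hr, hsumX])
  have hβ : α / (1 - α) < 0 := div_neg_of_pos_of_neg (by linarith) (by linarith)
  rw [FtildeLP_eq_klD_tilted (by positivity) hα.ne' (by linarith) hpX hpYX hr hqt hsum,
    EReal.coe_le_coe_iff]
  linarith [mul_nonpos_of_nonpos_of_nonneg hβ.le hjoint,
    mul_nonpos_of_nonpos_of_nonneg (by linarith : α / (1 - α) - 1 ≤ 0) hmarg]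

theorem FtildeLP_tiltedJoint [Fintype X] [Nonempty X] [Nonempty Y] (hα₀ : α ≠ 0)
    (hα₁ : α ≠ 1) (hα₂ : 2 * α ≠ 1) (hpX : ∀ x, 0 < pX x)
    (hpYX : ∀ x y, 0 < pYX x y) (hr : ∀ y x, 0 < r y x) :
    FtildeLP α pX pYX (tiltedJoint α pX pYX r) r
      = ((1 - α / (1 - α)) * log (tiltedPartition α pX pYX r) : ℝ) := by
  have hpos : ∀ z, 0 < tiltedJoint α pX pYX r z := fun z =>
    mul_pos (tiltedMarginal_pos hpX hpYX hr z.1) (tiltedChannel_pos hpYX hr z.1 z.2)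
  have hsum : ∑ z, tiltedJoint α pX pYX r z = 1 := by
    rw [Fintype.sum_prod_type]
    simp only [sum_tiltedJoint_fst hpYX hr, sum_tiltedMarginal hpX hpYX hr]
  rw [FtildeLP_eq_klD_tilted hα₀ hα₁ hα₂ hpX hpYX hr hpos hsum]
  simp only [sum_tiltedJoint_fst hpYX hr]
  rw [show (fun z : X × Y => tiltedMarginal α pX pYX r z.1 * tiltedChannel α pYX r z.1 z.2)
    = tiltedJoint α pX pYX r from rfl, klD_self, klD_self, mul_zero, mul_zero, zero_add, zero_add]

end Tilted

theorem FtildeLP_max_updates_general {X Y : Type*} [Fintype X] [Fintype Y] [Nonempty X] [Nonempty Y]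
    (α : ℝ) (hα : 1 < α)
    (pX : X → ℝ) (hpXpos : ∀ x, 0 < pX x)
    (pYX : X → Y → ℝ) (hpYXpos : ∀ x y, 0 < pYX x y) :
    (∀ qt : X × Y → ℝ, IsPMF qt → (∀ z, 0 < qt z) →
      ∀ r : Y → X → ℝ, (∀ y, IsPMF (r y)) →
        FtildeLP α pX pYX qt r ≤
        FtildeLP α pX pYX qt (fun y x => qt (x, y) / ∑ x', qt (x', y))) ∧
    (∀ r : Y → X → ℝ, (∀ y, IsPMF (r y)) → (∀ y x, 0 < r y x) →
      ∀ qt : X × Y → ℝ, IsPMF qt → (∀ z, 0 < qt z) →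
        FtildeLP α pX pYX qt r ≤
        FtildeLP α pX pYX
          (fun z : X × Y =>
            (pX z.1 ^ (α / (2 * α - 1)) *
                (∑ y, pYX z.1 y * r y z.1 ^ (1 - 1 / α)) ^ (α / (2 * α - 1)) /
              ∑ x', pX x' ^ (α / (2 * α - 1)) *
                (∑ y, pYX x' y * r y x' ^ (1 - 1 / α)) ^ (α / (2 * α - 1))) *
            (pYX z.1 z.2 * r z.2 z.1 ^ (1 - 1 / α) /
              ∑ y', pYX z.1 y' * r y' z.1 ^ (1 - 1 / α))) r) := by
  refine ⟨fun qt _ hqt r hr => FtildeLP_le_FtildeLP_posterior α pX pYX hqt hr,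
    fun r _ hr qt hqt hqtpos => ?_⟩
  calc FtildeLP α pX pYX qt r
      ≤ ((1 - α / (1 - α)) * log (tiltedPartition α pX pYX r) : ℝ) :=
        FtildeLP_le_log_tiltedPartition hα hpXpos hpYXpos hr hqtpos hqt.2
    _ = FtildeLP α pX pYX (tiltedJoint α pX pYX r) r :=
        (FtildeLP_tiltedJoint (by positivity) hα.ne' (by linarith) hpXpos hpYXpos hr).symm

/-- Alternating-maximization updating formulae for `F̃_α^{LP}` when `α > 1`:
(1) for fixed strictly positive `q̃_{X,Y}`, the maximizing reverse channel is the posterior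
`r*(x|y) = q̃_{X,Y}(x,y)/Σ_{x'} q̃_{X,Y}(x',y)`; (2) for fixed strictly positive `r_{X|Y}`,
the maximizing strictly positive `q̃_{X,Y}` is the product `q̂_X q̂_{Y|X}` of the stated
tilted distributions. -/
theorem FtildeLP_max_updates {X Y : Type*} [Fintype X] [Fintype Y] [Nonempty X] [Nonempty Y]
    (α : ℝ) (hα : 1 < α)
    (pX : X → ℝ) (hpX : IsPMF pX) (hpXpos : ∀ x, 0 < pX x)
    (pYX : X → Y → ℝ) (hpYX : ∀ x, IsPMF (pYX x)) (hpYXpos : ∀ x y, 0 < pYX x y) :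
    (∀ qt : X × Y → ℝ, IsPMF qt → (∀ z, 0 < qt z) →
      ∀ r : Y → X → ℝ, (∀ y, IsPMF (r y)) →
        FtildeLP α pX pYX qt r ≤
        FtildeLP α pX pYX qt (fun y x => qt (x, y) / ∑ x', qt (x', y))) ∧
    (∀ r : Y → X → ℝ, (∀ y, IsPMF (r y)) → (∀ y x, 0 < r y x) →
      ∀ qt : X × Y → ℝ, IsPMF qt → (∀ z, 0 < qt z) →
        FtildeLP α pX pYX qt r ≤
        FtildeLP α pX pYX
          (fun z : X × Y =>
            (pX z.1 ^ (α / (2 * α - 1)) *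
                (∑ y, pYX z.1 y * r y z.1 ^ (1 - 1 / α)) ^ (α / (2 * α - 1)) /
              ∑ x', pX x' ^ (α / (2 * α - 1)) *
                (∑ y, pYX x' y * r y x' ^ (1 - 1 / α)) ^ (α / (2 * α - 1))) *
            (pYX z.1 z.2 * r z.2 z.1 ^ (1 - 1 / α) /
              ∑ y', pYX z.1 y' * r y' z.1 ^ (1 - 1 / α))) r) :=
  FtildeLP_max_updates_general α hα pX hpXpos pYX hpYXpos
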